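/- arXiv:2112.10330 — 3 statements merged into one kernel-verified Lean document; each statement's English description precedes it below -/
import Mathlib

section
/- A first-order theory T is Δ-based (every T-formula is T-equivalent to a Boolean combination of formulas from Δ) if and only if, for any tuple ā of any (equivalently, some) weakly saturated model of T, the complete type tp(ā) is Δ-based (i.e., isolated by the set of formulas φ^δ ∈ tp(ā) with φ ∈ Δ, δ ∈ {0,1}). -/
/-!
If `T` is `Δ`-based, every formula is `T`-equivalent to a Boolean combination of `Δ`-instances,
whose truth at a tuple is read off from the `Δ`-part of its type. Conversely, weak saturation
moves any tuple of any model into `M`, so `Δ`-basedness of the types realized in `M` says that the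
truth of a formula `φ` at a tuple depends only on which `Δ`-instances the tuple satisfies. Two
compactness arguments turn this into a Boolean combination: each tuple satisfying `φ` satisfies a
finite conjunction of `Δ`-literals that `T`-implies `φ`, and then finitely many of these
conjunctions already cover `φ`.
-/

open FirstOrder Language Cardinal

namespace AlmostArity

/-- Boolean combinations of formulas from a set `S` of formulas. -/
inductive BoolComb {L : FirstOrder.Language.{0, 0}} {α : Type} (S : Set (L.Formula α)) :
    L.Formula α → Prop
  | base {φ : L.Formula α} : φ ∈ S → BoolComb S φ
  | falsum : BoolComb S ⊥
  | not {φ : L.Formula α} : BoolComb S φ → BoolComb S φ.not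
  | imp {φ ψ : L.Formula α} : BoolComb S φ → BoolComb S ψ → BoolComb S (φ.imp ψ)

/-- The set of formulas in `k` variables that are substitution instances of formulas with at
most `n` free variables, together with the equality formulas `xᵢ ≈ xⱼ`. -/
def nAryInstances (L : FirstOrder.Language.{0, 0}) (n k : ℕ) : Set (L.Formula (Fin k)) :=
  {χ | ∃ (j : ℕ) (_ : j ≤ n) (χ₀ : L.Formula (Fin j)) (f : Fin j → Fin k), χ = χ₀.relabel f} ∪
    {χ | ∃ i j : Fin k, χ = Term.equal (Term.var i) (Term.var j)}

/-- The set of formulas in `k` variables obtained from the formulas `Φ` by substitutions of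
free variables. -/
def substInstances {L : FirstOrder.Language.{0, 0}} {m r : ℕ}
    (Φ : Fin m → L.Formula (Fin r)) (k : ℕ) : Set (L.Formula (Fin k)) :=
  {χ | ∃ (i : Fin m) (f : Fin r → Fin k), χ = (Φ i).relabel f}

/-- A formula `φ` of a theory `T` is `n`-ary if it is `T`-equivalent to a Boolean combination of
`T`-formulas each having at most `n` free variables. -/
def IsNAryFormula {L : FirstOrder.Language.{0, 0}} (T : L.Theory) (n : ℕ) {k : ℕ}
    (φ : L.Formula (Fin k)) : Prop :=
  ∃ ψ : L.Formula (Fin k), BoolComb (nAryInstances L n k) ψ ∧ φ ⇔[T] ψ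

/-- A theory `T` is `n`-ary if every `T`-formula is `n`-ary. -/
def IsNAry {L : FirstOrder.Language.{0, 0}} (T : L.Theory) (n : ℕ) : Prop :=
  ∀ (k : ℕ) (φ : L.Formula (Fin k)), IsNAryFormula T n φ

/-- The arity `ar_T(φ)` of a formula `φ` of a theory `T`:  the least `n` such that `φ` is
`n`-ary (`⊤ = ∞` if there is no such `n`). -/
noncomputable def arFormula {L : FirstOrder.Language.{0, 0}} (T : L.Theory) {k : ℕ}
    (φ : L.Formula (Fin k)) : ℕ∞ :=
  sInf {N : ℕ∞ | ∃ n : ℕ, N = n ∧ IsNAryFormula T n φ}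

/-- The arity `ar(T)` of a theory `T`: the least `n ≥ 1` such that `T` is `n`-ary
(`⊤ = ∞` if there is no such `n`). -/
noncomputable def ar {L : FirstOrder.Language.{0, 0}} (T : L.Theory) : ℕ∞ :=
  sInf {N : ℕ∞ | ∃ n : ℕ, 1 ≤ n ∧ N = n ∧ IsNAry T n}

/-- The formulas `Φ` witness that `T` is almost `n`-ary:  every `T`-formula is `T`-equivalent
to a Boolean combination of `n`-ary formulas and of formulas obtained by substitutions of free
variables in the formulas of `Φ`. -/
def AlmostWitness {L : FirstOrder.Language.{0, 0}} (T : L.Theory) (n : ℕ) {m r : ℕ}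
    (Φ : Fin m → L.Formula (Fin r)) : Prop :=
  ∀ (k : ℕ) (φ : L.Formula (Fin k)),
    ∃ ψ : L.Formula (Fin k), BoolComb (nAryInstances L n k ∪ substInstances Φ k) ψ ∧ φ ⇔[T] ψ

/-- A theory `T` is almost `n`-ary if there are finitely many formulas `φ₁ x̄, …, φ_m x̄` such
that every `T`-formula is `T`-equivalent to a Boolean combination of `n`-ary formulas and of
formulas obtained by substitutions of free variables in `φ₁, …, φ_m`. -/
def IsAlmostNAry {L : FirstOrder.Language.{0, 0}} (T : L.Theory) (n : ℕ) : Prop :=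
  ∃ (m r : ℕ) (Φ : Fin m → L.Formula (Fin r)), AlmostWitness T n Φ

/-- `aar(T)`: the least `n ≥ 1` such that `T` is almost `n`-ary (`⊤ = ∞` if there is none). -/
noncomputable def aar {L : FirstOrder.Language.{0, 0}} (T : L.Theory) : ℕ∞ :=
  sInf {N : ℕ∞ | ∃ n : ℕ, 1 ≤ n ∧ N = n ∧ IsAlmostNAry T n}

/-- The degree `deg_aar(T)` of almost `n`-arity: the pair `(m, r)` where `m` is the minimal
number of witnessing formulas and `r` the minimal length of their tuple of free variables
(with `(0, 0)` when no extra formulas are needed, i.e. when `T` is `n`-ary). -/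
noncomputable def degAar {L : FirstOrder.Language.{0, 0}} (T : L.Theory) (n : ℕ) : ℕ × ℕ :=
  let m := sInf {m : ℕ | ∃ (r : ℕ) (Φ : Fin m → L.Formula (Fin r)), AlmostWitness T n Φ}
  (m, sInf {r : ℕ | ∃ Φ : Fin m → L.Formula (Fin r), AlmostWitness T n Φ})

/-- `T'` is an expansion of `T`: a complete theory in a larger language whose restriction to
the language of `T` is `T`. -/
def IsExpansion {L L' : FirstOrder.Language.{0, 0}} (f : L →ᴸ L') (T : L.Theory)
    (T' : L'.Theory) : Prop :=
  T'.IsComplete ∧ ∀ φ : L.Sentence, φ ∈ T ↔ f.onSentence φ ∈ T'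

/-- A theory `T` is `n`-aritizable if it has an `n`-ary expansion. -/
def IsNAritizable {L : FirstOrder.Language.{0, 0}} (T : L.Theory) (n : ℕ) : Prop :=
  ∃ (L' : FirstOrder.Language.{0, 0}) (f : L →ᴸ L') (T' : L'.Theory),
    IsExpansion f T T' ∧ IsNAry T' n

/-- A theory `T` is almost `n`-aritizable if it has an almost `n`-ary expansion. -/
def IsAlmostNAritizable {L : FirstOrder.Language.{0, 0}} (T : L.Theory) (n : ℕ) : Prop :=
  ∃ (L' : FirstOrder.Language.{0, 0}) (f : L →ᴸ L') (T' : L'.Theory),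
    IsExpansion f T T' ∧ IsAlmostNAry T' n

/-- A countable complete theory is `ω`-categorical if it has exactly one countable model up to
isomorphism. -/
def IsOmegaCategorical {L : FirstOrder.Language.{0, 0}} (T : L.Theory) : Prop :=
  L.card ≤ Cardinal.aleph0 ∧ T.IsComplete ∧ Cardinal.Categorical Cardinal.aleph0.{0} T


/-- The substitution instances in `k` variables of the formulas of `Δ`. -/
def deltaInstances {L : FirstOrder.Language.{0, 0}} (Δ : ∀ j : ℕ, Set (L.Formula (Fin j)))
    (k : ℕ) : Set (L.Formula (Fin k)) :=
  {χ | ∃ (j : ℕ) (φ : L.Formula (Fin j)) (f : Fin j → Fin k), φ ∈ Δ j ∧ χ = φ.relabel f}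

/-- A theory `T` is `Δ`-based if every `T`-formula is `T`-equivalent to a Boolean combination
of formulas from `Δ`. -/
def DeltaBasedTheory {L : FirstOrder.Language.{0, 0}} (T : L.Theory)
    (Δ : ∀ j : ℕ, Set (L.Formula (Fin j))) : Prop :=
  ∀ (k : ℕ) (φ : L.Formula (Fin k)), ∃ ψ, BoolComb (deltaInstances Δ k) ψ ∧ φ ⇔[T] ψ

/-- `M` is a weakly saturated model of `T`: it realizes every complete type of `T`, i.e. every
type realized in some model of `T`. -/
def WeaklySaturated {L : FirstOrder.Language.{0, 0}} (T : L.Theory) (M : Type)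
    [L.Structure M] : Prop :=
  ∀ (N : Theory.ModelType.{0, 0, 0} T) (k : ℕ) (b : Fin k → N), ∃ a : Fin k → M,
    ∀ φ : L.Formula (Fin k), φ.Realize a ↔ φ.Realize b

/-- The complete type `tp(ā)` is `Δ`-based: it is isolated (axiomatized modulo `T`) by the set
of formulas `φ^δ ∈ tp(ā)` with `φ ∈ Δ`, `δ ∈ {0, 1}`, i.e. any tuple in any model of `T`
realizing the same formulas of `Δ` and the same negations realizes the whole type. -/
def DeltaBasedType {L : FirstOrder.Language.{0, 0}} (T : L.Theory)
    (Δ : ∀ j : ℕ, Set (L.Formula (Fin j))) {M : Type} [L.Structure M] {k : ℕ}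
    (a : Fin k → M) : Prop :=
  ∀ (N : Theory.ModelType.{0, 0, 0} T) (b : Fin k → N),
    (∀ χ ∈ deltaInstances Δ k, (χ.Realize b ↔ χ.Realize a)) →
      ∀ φ : L.Formula (Fin k), (φ.Realize b ↔ φ.Realize a)

variable {L : FirstOrder.Language.{0, 0}} {α : Type}

namespace BoolComb

variable {S : Set (L.Formula α)}

theorem top : BoolComb S ⊤ :=
  not falsum

theorem inf {φ ψ : L.Formula α} (hφ : BoolComb S φ) (hψ : BoolComb S ψ) : BoolComb S (φ ⊓ ψ) :=
  not (imp hφ (not hψ))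

theorem iInf {β : Type} [Finite β] {f : β → L.Formula α} (hf : ∀ b, BoolComb S (f b)) :
    BoolComb S (Formula.iInf f) := by
  let _ := Fintype.ofFinite β
  suffices ∀ l : List (L.Formula α), (∀ φ ∈ l, BoolComb S φ) → BoolComb S (l.foldr (· ⊓ ·) ⊤) by
    refine this _ fun φ hφ => ?_
    obtain ⟨b, -, rfl⟩ := List.mem_map.1 hφ
    exact hf b
  intro l hl
  induction l with
  | nil => exact top
  | cons φ l ih => exact inf (hl φ List.mem_cons_self) (ih fun ψ hψ => hl ψ (.tail _ hψ))

theorem realize_iff {M N : Type} [L.Structure M] [L.Structure N] {ψ : L.Formula α}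
    (hψ : BoolComb S ψ) {a : α → M} {b : α → N} (hab : ∀ χ ∈ S, χ.Realize a ↔ χ.Realize b) :
    ψ.Realize a ↔ ψ.Realize b := by
  induction hψ with
  | base h => exact hab _ h
  | falsum => simp only [Formula.realize_bot]
  | not _ ih => rw [Formula.realize_not, Formula.realize_not, ih]
  | imp _ _ ih₁ ih₂ => rw [Formula.realize_imp, Formula.realize_imp, ih₁, ih₂]

end BoolComb

def Entails (T : L.Theory) (X : Set (L.Formula α)) (φ : L.Formula α) : Prop :=
  ∀ (N : Theory.ModelType.{0, 0, 0} T) (v : α → N), (∀ χ ∈ X, χ.Realize v) → φ.Realize v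

theorem isSatisfiable_onTheory_union_equivSentence_iff (T : L.Theory) (X : Set (L.Formula α)) :
    ((L.lhomWithConstants α).onTheory T ∪ Formula.equivSentence '' X).IsSatisfiable ↔
      ∃ (N : Theory.ModelType.{0, 0, 0} T) (v : α → N), ∀ χ ∈ X, χ.Realize v := by
  constructor
  · rintro ⟨M⟩
    let _ := (L.lhomWithConstants α).reduct M
    have : M ⊨ T := (LHom.onTheory_model _ _).1 (M.is_model.mono Set.subset_union_left)
    refine ⟨.of T M, fun i => (L.con i : M), fun χ hχ => ?_⟩
    exact (Formula.realize_equivSentence M χ).1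
      (M.is_model.realize_of_mem _ (Set.mem_union_right _ ⟨χ, hχ, rfl⟩))
  · rintro ⟨N, v, hv⟩
    let _ : (constantsOn α).Structure N := constantsOn.structure v
    have : N ⊨ (L.lhomWithConstants α).onTheory T ∪ Formula.equivSentence '' X := by
      refine Theory.Model.union ((LHom.onTheory_model _ _).2 inferInstance) ?_
      rw [Theory.model_iff]
      rintro _ ⟨χ, hχ, rfl⟩
      exact (Formula.realize_equivSentence N χ).2 (hv χ hχ)
    exact Theory.Model.isSatisfiable N

theorem Entails.exists_finset {T : L.Theory} {X : Set (L.Formula α)} {φ : L.Formula α}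
    (h : Entails T X φ) : ∃ Y : Finset (L.Formula α), ↑Y ⊆ X ∧ Entails T ↑Y φ := by
  classical
  have hunsat : ¬((L.lhomWithConstants α).onTheory T ∪
      Formula.equivSentence '' insert φ.not X).IsSatisfiable := by
    rw [isSatisfiable_onTheory_union_equivSentence_iff]
    rintro ⟨N, v, hv⟩
    exact Formula.realize_not.1 (hv _ (Set.mem_insert _ _))
      (h N v fun χ hχ => hv χ (Set.mem_insert_of_mem _ hχ))
  rw [Theory.isSatisfiable_iff_isFinitelySatisfiable, Theory.IsFinitelySatisfiable] at hunsat
  push Not at hunsat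
  obtain ⟨T₀, hT₀, hT₀unsat⟩ := hunsat
  set Y := (T₀.preimage Formula.equivSentence Formula.equivSentence.injective.injOn).filter (· ∈ X)
  refine ⟨Y, fun χ hχ => (Finset.mem_filter.1 hχ).2, fun N v hv => ?_⟩
  by_contra hφ
  refine hT₀unsat (((isSatisfiable_onTheory_union_equivSentence_iff T
    (insert φ.not ↑Y)).2 ⟨N, v, ?_⟩).mono fun s hs => ?_)
  · rintro χ (rfl | hχ)
    exacts [Formula.realize_not.2 hφ, hv χ hχ]
  · rcases hT₀ hs with hT | ⟨χ, rfl | hχX, rfl⟩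
    · exact .inl hT
    · exact .inr ⟨_, Set.mem_insert _ _, rfl⟩
    · exact .inr ⟨χ, Set.mem_insert_of_mem _ (by simpa [Y] using ⟨hs, hχX⟩), rfl⟩

theorem Entails.exists_boolComb {T : L.Theory} {S X : Set (L.Formula α)} {φ : L.Formula α}
    (h : Entails T X φ) (hX : ∀ χ ∈ X, BoolComb S χ) :
    ∃ ψ, BoolComb S ψ ∧ (∀ {M : Type} [L.Structure M] (v : α → M),
      (∀ χ ∈ X, χ.Realize v) → ψ.Realize v) ∧ ψ ⟹[T] φ := by
  obtain ⟨Y, hYX, hY⟩ := h.exists_finset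
  refine ⟨Formula.iInf fun χ : Y => χ.1, BoolComb.iInf fun χ => hX χ (hYX χ.2),
    fun v hv => Formula.realize_iInf.2 fun χ => hv χ (hYX χ.2), ?_⟩
  rw [Theory.Imp, Theory.models_formula_iff]
  intro N v
  rw [Formula.realize_imp, Formula.realize_iInf]
  exact fun hv => hY N v fun χ hχ => hv ⟨χ, hχ⟩

def literalType {M : Type} [L.Structure M] (S : Set (L.Formula α)) (a : α → M) :
    Set (L.Formula α) :=
  {χ | χ ∈ S ∧ χ.Realize a} ∪ Formula.not '' {χ | χ ∈ S ∧ ¬χ.Realize a}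

section literalType

variable {M : Type} [L.Structure M] {S : Set (L.Formula α)} {a : α → M}

theorem boolComb_of_mem_literalType {χ : L.Formula α} (hχ : χ ∈ literalType S a) :
    BoolComb S χ := by
  rcases hχ with ⟨hS, -⟩ | ⟨χ, ⟨hS, -⟩, rfl⟩
  exacts [.base hS, .not (.base hS)]

theorem realize_of_mem_literalType {χ : L.Formula α} (hχ : χ ∈ literalType S a) :
    χ.Realize a := by
  rcases hχ with ⟨-, h⟩ | ⟨χ, ⟨-, h⟩, rfl⟩
  exacts [h, Formula.realize_not.2 h]

theorem realize_iff_of_forall_literalType {N : Type} [L.Structure N] {b : α → N}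
    (hb : ∀ χ ∈ literalType S a, χ.Realize b) : ∀ χ ∈ S, χ.Realize a ↔ χ.Realize b := by
  intro χ hS
  by_cases ha : χ.Realize a
  · exact iff_of_true ha (hb χ (.inl ⟨hS, ha⟩))
  · exact iff_of_false ha (Formula.realize_not.1 (hb χ.not (.inr ⟨χ, ⟨hS, ha⟩, rfl⟩)))

end literalType

section separation

variable {T : L.Theory} {S : Set (L.Formula α)} {φ : L.Formula α}

theorem exists_boolComb_imp_of_realize
    (hφ : ∀ (N₁ N₂ : Theory.ModelType.{0, 0, 0} T) (a : α → N₁) (b : α → N₂),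
      (∀ χ ∈ S, χ.Realize a ↔ χ.Realize b) → φ.Realize a → φ.Realize b)
    {N : Theory.ModelType.{0, 0, 0} T} {a : α → N} (ha : φ.Realize a) :
    ∃ ψ, BoolComb S ψ ∧ ψ.Realize a ∧ ψ ⟹[T] φ := by
  have h : Entails T (literalType S a) φ := fun N' b hb =>
    hφ N N' a b (realize_iff_of_forall_literalType hb) ha
  obtain ⟨ψ, hψS, hψa, hψφ⟩ := h.exists_boolComb fun _ => boolComb_of_mem_literalType
  exact ⟨ψ, hψS, hψa a fun _ => realize_of_mem_literalType, hψφ⟩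

theorem exists_boolComb_iff_of_realize
    (hφ : ∀ (N₁ N₂ : Theory.ModelType.{0, 0, 0} T) (a : α → N₁) (b : α → N₂),
      (∀ χ ∈ S, χ.Realize a ↔ χ.Realize b) → φ.Realize a → φ.Realize b) :
    ∃ ψ, BoolComb S ψ ∧ φ ⇔[T] ψ := by
  let D := Formula.not '' {ψ | BoolComb S ψ ∧ ψ ⟹[T] φ}
  have hD : Entails T D φ.not := fun N a ha => Formula.realize_not.2 fun hφa => by
    obtain ⟨ψ, hψS, hψa, hψφ⟩ := exists_boolComb_imp_of_realize hφ hφa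
    exact Formula.realize_not.1 (ha _ ⟨ψ, ⟨hψS, hψφ⟩, rfl⟩) hψa
  obtain ⟨θ, hθS, hDθ, hθφ⟩ := hD.exists_boolComb (by
    rintro _ ⟨ψ, ⟨hψS, -⟩, rfl⟩
    exact .not hψS)
  refine ⟨θ.not, .not hθS, Theory.imp_antisymm ?_ ?_⟩
  all_goals
    rw [Theory.Imp, Theory.models_formula_iff]
    intro N a
    simp only [Formula.realize_imp, Formula.realize_not]
  · exact fun hφa hθa => (Theory.models_formula_iff.1 hθφ N a) hθa hφa
  · intro hθa
    by_contra hφa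
    refine hθa (hDθ a ?_)
    rintro _ ⟨ψ, ⟨-, hψφ⟩, rfl⟩
    exact Formula.realize_not.2 fun hψa => hφa (Theory.models_formula_iff.1 hψφ N a hψa)

end separation

theorem WeaklySaturated.nonempty {T : L.Theory} {M : Type} [L.Structure M]
    (hws : WeaklySaturated T M) (N : Theory.ModelType.{0, 0, 0} T) : Nonempty M :=
  ⟨(hws N 1 fun _ => Classical.arbitrary N).choose 0⟩

/-- A theory `T` is `Δ`-based if and only if for any tuple `ā` of any (some) weakly saturated
model of `T` the type `tp(ā)` is `Δ`-based. -/
theorem statement0 {L : FirstOrder.Language.{0, 0}} (T : L.Theory)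
    (Δ : ∀ j : ℕ, Set (L.Formula (Fin j))) (M : Type) [L.Structure M]
    (hM : T.Model M) (hws : WeaklySaturated T M) :
    DeltaBasedTheory T Δ ↔ ∀ (k : ℕ) (a : Fin k → M), DeltaBasedType T Δ a := by
  constructor
  · intro hT k a N b hab φ
    obtain ⟨ψ, hψΔ, hφψ⟩ := hT k φ
    have := hws.nonempty N
    rw [hφψ.realize_iff (M := N), hφψ.realize_iff (M := M)]
    exact hψΔ.realize_iff hab
  · intro hΔ k φ
    refine exists_boolComb_iff_of_realize fun N₁ N₂ a b hab hφa => ?_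
    obtain ⟨a', ha'⟩ := hws N₁ k a
    have hba' := hΔ k a' N₂ b fun χ hχ => ((ha' χ).trans (hab χ hχ)).symm
    exact (hba' φ).2 ((ha' φ).2 hφa)

end AlmostArity
end

section
/- A first-order theory T is n-ary for some n ∈ ω if and only if T is almost m-ary for some m ∈ ω. -/
open FirstOrder Language Cardinal

namespace AlmostArity

/-- A theory `T` is `n`-ary for some `n` if and only if `T` is almost `m`-ary for some `m`. -/
theorem statement4 {L : FirstOrder.Language.{0, 0}} (T : L.Theory) :
    (∃ n : ℕ, IsNAry T n) ↔ (∃ m : ℕ, IsAlmostNAry T m) := by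
  have mono : ∀ {α : Type} {S S' : Set (L.Formula α)} {φ : L.Formula α},
      S ⊆ S' → BoolComb S φ → BoolComb S' φ := by
    intro α S S' φ hSS h
    induction h with
    | base h => exact BoolComb.base (hSS h)
    | falsum => exact BoolComb.falsum
    | not _ ih => exact BoolComb.not ih
    | imp _ _ ih1 ih2 => exact BoolComb.imp ih1 ih2
  constructor
  · rintro ⟨n, hn⟩
    refine ⟨n, 0, 0, Fin.elim0, ?_⟩
    intro k φ
    obtain ⟨ψ, hψ, hequiv⟩ := hn k φ
    exact ⟨ψ, mono Set.subset_union_left hψ, hequiv⟩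
  · rintro ⟨m, m', r, Φ, hΦ⟩
    refine ⟨max m r, fun k φ => ?_⟩
    obtain ⟨ψ, hψ, hequiv⟩ := hΦ k φ
    refine ⟨ψ, mono ?_ hψ, hequiv⟩
    intro χ hχ
    rcases hχ with hχ | hχ
    · rcases hχ with hχ | hχ
      · obtain ⟨j, hj, χ₀, f, rfl⟩ := hχ
        exact Or.inl ⟨j, le_trans hj (le_max_left m r), χ₀, f, rfl⟩
      · exact Or.inr hχ
    · obtain ⟨i, f, rfl⟩ := hχ
      exact Or.inl ⟨r, le_max_right m r, Φ i, f, rfl⟩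

end AlmostArity
end

section
/- A first-order theory T is n-aritizable for some n ∈ ω if and only if T is almost m-aritizable for some m ∈ ω. -/
open FirstOrder Language Cardinal

namespace AlmostArity

lemma BoolComb.mono {L : FirstOrder.Language.{0, 0}} {α : Type} {S S' : Set (L.Formula α)}
    (hS : S ⊆ S') {φ : L.Formula α} (h : BoolComb S φ) : BoolComb S' φ := by
  induction h with
  | base h => exact .base (hS h)
  | falsum => exact .falsum
  | not _ ih => exact .not ih
  | imp _ _ ih₁ ih₂ => exact .imp ih₁ ih₂

lemma nAryInstances_mono (L : FirstOrder.Language.{0, 0}) {n n' : ℕ} (h : n ≤ n') (k : ℕ) :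
    nAryInstances L n k ⊆ nAryInstances L n' k := by
  rintro χ (⟨j, hj, χ₀, f, rfl⟩ | h)
  · exact Or.inl ⟨j, hj.trans h, χ₀, f, rfl⟩
  · exact Or.inr h

/-- A theory `T` is `n`-aritizable for some `n` if and only if `T` is almost `m`-aritizable for
some `m`. -/
theorem statement5 {L : FirstOrder.Language.{0, 0}} (T : L.Theory) :
    (∃ n : ℕ, IsNAritizable T n) ↔ (∃ m : ℕ, IsAlmostNAritizable T m) := by
  constructor
  · rintro ⟨n, L', f, T', hexp, hnary⟩
    refine ⟨n, L', f, T', hexp, 0, 0, Fin.elim0, fun k φ => ?_⟩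
    obtain ⟨ψ, hbc, hequiv⟩ := hnary k φ
    refine ⟨ψ, hbc.mono (Set.subset_union_left), hequiv⟩
  · rintro ⟨m, L', f, T', hexp, mm, r, Φ, hwit⟩
    refine ⟨max m r, L', f, T', hexp, fun k φ => ?_⟩
    obtain ⟨ψ, hbc, hequiv⟩ := hwit k φ
    refine ⟨ψ, hbc.mono ?_, hequiv⟩
    rintro χ (hχ | ⟨i, g, rfl⟩)
    · exact nAryInstances_mono L' (le_max_left m r) k hχ
    · exact Or.inl ⟨r, le_max_right m r, Φ i, g, rfl⟩

end AlmostArity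
end
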